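/- arXiv:2307.05705 — 2 statements merged into one kernel-verified Lean document; each statement's English description precedes it below -/
import Mathlib

section
/- For probability measures σ, μ on ℝ (with σ absolutely continuous), the map T = F_μ^{-1} ∘ F_σ, where F_σ is the CDF of σ and F_μ^{-1} its generalized inverse, pushes σ forward to μ, i.e., T_♯σ = μ. -/
open MeasureTheory
open scoped ENNReal RealInnerProductSpace

noncomputable section

abbrev Eu (n : ℕ) := EuclideanSpace ℝ (Fin n)

def W2sq {X : Type*} [MeasurableSpace X] [NormedAddCommGroup X] (σ μ : Measure X) : ℝ≥0∞ :=
  ⨅ (π : Measure (X × X)) (_ : π.map Prod.fst = σ ∧ π.map Prod.snd = μ),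
    ∫⁻ p, (‖p.1 - p.2‖₊ : ℝ≥0∞) ^ 2 ∂π

def W2 {X : Type*} [MeasurableSpace X] [NormedAddCommGroup X] (σ μ : Measure X) : ℝ≥0∞ :=
  W2sq σ μ ^ (1/2 : ℝ)

def cdf' (μ : Measure ℝ) (x : ℝ) : ℝ := (μ (Set.Iic x)).toReal

def qf (μ : Measure ℝ) (y : ℝ) : ℝ := sInf {z : ℝ | y ≤ cdf' μ z}

def otMap1d (σ μ : Measure ℝ) (x : ℝ) : ℝ := qf μ (cdf' σ x)

def proj {n : ℕ} (θ : Eu n) (x : Eu n) : ℝ := (inner ℝ x θ : ℝ)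

def sliceOf {n : ℕ} (σ : Measure (Eu n)) (θ : Eu n) : Measure ℝ := σ.map (proj θ)

def sliceMap {n : ℕ} (σ μ : Measure (Eu n)) (θ : Fin n → Eu n) (j : ℕ) (x : Eu n) : Eu n :=
  ∑ i : Fin n,
    (if (i : ℕ) < j then otMap1d (sliceOf σ (θ i)) (sliceOf μ (θ i)) (proj (θ i) x)
     else proj (θ i) x) • θ i

def singleSlice {n : ℕ} (σ μ : Measure (Eu n)) (θ : Eu n) (x : Eu n) : Eu n :=
  x + (otMap1d (sliceOf σ θ) (sliceOf μ θ) (proj θ x) - proj θ x) • θ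

def FiniteSecondMoment {X : Type*} [MeasurableSpace X] [NormedAddCommGroup X]
    (μ : Measure X) : Prop :=
  ∫⁻ x, (‖x‖₊ : ℝ≥0∞) ^ 2 ∂μ < ⊤

/-! When σ has no atoms its CDF `F` is continuous, so each sublevel set `{F ≤ c}` is an interval
`Iic b` with `F b = c`; hence `F` pushes σ to the uniform measure on `(0, 1)`. On `(0, 1)` the
quantile function of μ is the lower adjoint of its CDF (`qf μ y ≤ x ↔ y ≤ F_μ x`), so the uniform
measure of `{qf μ ≤ x}` is `F_μ x`, i.e. `qf μ` pushes the uniform measure on `(0, 1)` to μ. -/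

open ProbabilityTheory Set Filter Topology

lemma cdf'_eq_cdf (μ : Measure ℝ) [IsProbabilityMeasure μ] : cdf' μ = cdf μ := by
  ext x
  rw [cdf', cdf_eq_real, measureReal_def]

lemma volume_restrict_Ioo_zero_one_Iic (c : ℝ) :
    volume.restrict (Ioo (0 : ℝ) 1) (Iic c) = ENNReal.ofReal (min 1 c) := by
  rw [Measure.restrict_congr_set Ioo_ae_eq_Ioc, Measure.restrict_apply measurableSet_Iic,
    inter_comm, Ioc_inter_Iic, Real.volume_Ioc, sub_zero]

section Quantile

variable (μ : Measure ℝ) [IsProbabilityMeasure μ]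

lemma setOf_le_cdf_eq_Ici_qf {y : ℝ} (hy : y ∈ Ioo (0 : ℝ) 1) :
    {z | y ≤ cdf μ z} = Ici (qf μ y) := by
  set S := {z | y ≤ cdf μ z}
  have hne : S.Nonempty :=
    ((tendsto_cdf_atTop μ).eventually (eventually_gt_nhds hy.2)).exists.imp fun _ h => h.le
  have hbdd : BddBelow S := by
    obtain ⟨z₀, hz₀⟩ := ((tendsto_cdf_atBot μ).eventually (eventually_lt_nhds hy.1)).exists
    exact ⟨z₀, fun z hz => le_of_not_gt fun hlt => (hz.trans (monotone_cdf μ hlt.le)).not_gt hz₀⟩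
  have hqf : qf μ y = sInf S := by rw [qf, cdf'_eq_cdf]
  have hmem : sInf S ∈ S := by
    refine ge_of_tendsto (((cdf μ).right_continuous _).mono Ioi_subset_Ici_self) ?_
    filter_upwards [self_mem_nhdsWithin] with z hz
    obtain ⟨s, hs, hsz⟩ := exists_lt_of_csInf_lt hne hz
    exact hs.trans (monotone_cdf μ hsz.le)
  rw [hqf]
  ext z
  exact ⟨fun hz => csInf_le hbdd hz, fun hz => hmem.trans (monotone_cdf μ hz)⟩

lemma qf_le_iff_le_cdf {y : ℝ} (hy : y ∈ Ioo (0 : ℝ) 1) (x : ℝ) :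
    qf μ y ≤ x ↔ y ≤ cdf μ x := by
  rw [← mem_Ici, ← setOf_le_cdf_eq_Ici_qf μ hy, mem_ofPred_eq]

lemma monotoneOn_qf : MonotoneOn (qf μ) (Ioo 0 1) := fun _ hy₁ _ hy₂ h =>
  (qf_le_iff_le_cdf μ hy₁ _).2 (h.trans ((qf_le_iff_le_cdf μ hy₂ _).1 le_rfl))

lemma aemeasurable_qf : AEMeasurable (qf μ) (volume.restrict (Ioo 0 1)) :=
  aemeasurable_restrict_of_monotoneOn measurableSet_Ioo (monotoneOn_qf μ)

lemma map_qf_volume_restrict_Ioo :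
    (volume.restrict (Ioo 0 1)).map (qf μ) = μ := by
  refine (Measure.ext_of_Iic μ _ fun x => ?_).symm
  have hpre : qf μ ⁻¹' Iic x ∩ Ioo 0 1 = Iic (cdf μ x) ∩ Ioo 0 1 := by
    ext y
    simp only [mem_inter_iff, mem_preimage, mem_Iic]
    exact and_congr_left fun hy => qf_le_iff_le_cdf μ hy x
  rw [Measure.map_apply_of_aemeasurable (aemeasurable_qf μ) measurableSet_Iic,
    Measure.restrict_apply' measurableSet_Ioo, hpre, ← Measure.restrict_apply' measurableSet_Ioo,
    volume_restrict_Ioo_zero_one_Iic, min_eq_right (cdf_le_one μ x), ofReal_cdf]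

end Quantile

section ProbabilityIntegralTransform

variable (σ : Measure ℝ) [IsProbabilityMeasure σ] [NullSingletonClass σ]

lemma continuous_cdf : Continuous (cdf σ) := by
  refine continuous_iff_continuousAt.2 fun a => continuousAt_iff_continuous_left'_right'.2
    ⟨(monotone_cdf σ).continuousWithinAt_Iio_iff_leftLim_eq.2 ?_,
      ((cdf σ).right_continuous a).mono Ioi_subset_Ici_self⟩
  have h := (cdf σ).measure_singleton a
  rw [measure_cdf, measure_singleton, eq_comm, ENNReal.ofReal_eq_zero, sub_nonpos] at h
  exact le_antisymm ((monotone_cdf σ).leftLim_le le_rfl) h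

lemma measure_setOf_cdf_le (c : ℝ) : σ {t | cdf σ t ≤ c} = ENNReal.ofReal (min 1 c) := by
  set S := {t | cdf σ t ≤ c}
  have hdown : ∀ ⦃s t⦄, s ∈ S → t ≤ s → t ∈ S := fun s t hs hts =>
    (monotone_cdf σ hts).trans hs
  rcases S.eq_empty_or_nonempty with hS | hne
  · have hc : c ≤ 0 := ge_of_tendsto' (tendsto_cdf_atBot σ) fun t =>
      le_of_lt (not_le.1 (eq_empty_iff_forall_notMem.1 hS t))
    rw [hS, measure_empty, ENNReal.ofReal_of_nonpos (min_le_of_right_le hc)]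
  by_cases hbdd : BddAbove S
  · set b := sSup S
    have hb : b ∈ S := (isClosed_le (continuous_cdf σ) continuous_const).csSup_mem hne hbdd
    have hSb : S = Iic b := Subset.antisymm (fun t ht => le_csSup hbdd ht) fun _ => hdown hb
    have hcb : c ≤ cdf σ b := by
      refine ge_of_tendsto
        ((continuous_cdf σ).continuousAt.tendsto.mono_left (nhdsWithin_le_nhds (s := Ioi b))) ?_
      filter_upwards [self_mem_nhdsWithin] with t (ht : b < t)
      exact le_of_lt (not_le.1 fun h => ht.not_ge (le_csSup hbdd h))
    have hFb : cdf σ b = c := le_antisymm hb hcb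
    rw [hSb, ← ofReal_cdf, hFb, min_eq_right (hFb ▸ cdf_le_one σ b)]
  · have hS : S = univ := eq_univ_of_forall fun t => by
      obtain ⟨s, hs, hts⟩ := not_bddAbove_iff.1 hbdd t
      exact hdown hs hts.le
    have hc : 1 ≤ c := le_of_tendsto' (tendsto_cdf_atTop σ) fun t => (hS ▸ mem_univ t : t ∈ S)
    rw [hS, measure_univ, min_eq_left hc, ENNReal.ofReal_one]

lemma map_cdf_eq_volume_restrict_Ioo : σ.map (cdf σ) = volume.restrict (Ioo 0 1) := by
  refine Measure.ext_of_Iic _ _ fun c => ?_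
  rw [Measure.map_apply (monotone_cdf σ).measurable measurableSet_Iic,
    volume_restrict_Ioo_zero_one_Iic]
  exact measure_setOf_cdf_le σ c

end ProbabilityIntegralTransform

/-- The map `T = F_μ⁻¹ ∘ F_σ` pushes `σ` forward to `μ`. -/
theorem stmt_0 (σ μ : Measure ℝ) [IsProbabilityMeasure σ] [IsProbabilityMeasure μ]
    (hac : σ ≪ volume) :
    σ.map (otMap1d σ μ) = μ := by
  have : NullSingletonClass σ := ⟨fun x => hac (measure_singleton x)⟩
  have hT : otMap1d σ μ = qf μ ∘ cdf σ := by
    ext x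
    rw [otMap1d, cdf'_eq_cdf, Function.comp_apply]
  have hF := map_cdf_eq_volume_restrict_Ioo σ
  rw [hT, ← AEMeasurable.map_map_of_aemeasurable (hF ▸ aemeasurable_qf μ)
    (monotone_cdf σ).measurable.aemeasurable, hF, map_qf_volume_restrict_Ioo]

end
end

section
/- Let σ ∈ W₂(ℝⁿ) be absolutely continuous, μ ∈ W₂(ℝⁿ), {θ₁,…,θₙ} an orthonormal basis, 1 ≤ j ≤ n, and T the j-slice matching map. If ν = T_♯σ, then ν^{θ_i} = μ^{θ_i} for all 1 ≤ i ≤ j, i.e., the pushed-forward measure has the same slices as μ along the first j directions. -/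
open MeasureTheory
open scoped ENNReal RealInnerProductSpace

noncomputable section

/-! By orthonormality of the `θ i`, the `i`-th coordinate of the slice matching map is the
one-dimensional map `qf (μ^θ) ∘ cdf (σ^θ)` applied to `x · θ`, so `ν^θ` is the push-forward of `σ^θ`
under that map. As `σ ≪ volume`, its slices have no atoms, hence `cdf (σ^θ)` is continuous and
pushes `σ^θ` to the uniform law on `(0, 1)`; and the quantile function `qf (μ^θ)`, being the
lower adjoint `qf u ≤ t ↔ u ≤ cdf t` on `(0, 1)`, pushes the uniform law to `μ^θ`. -/

open Set Filter Topology ProbabilityTheory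

lemma volume_Ioo_inter_Iic (c : ℝ) :
    volume (Ioo (0 : ℝ) 1 ∩ Iic c) = ENNReal.ofReal (min c 1) := by
  refine le_antisymm ?_ ?_
  · calc volume (Ioo (0 : ℝ) 1 ∩ Iic c) ≤ volume (Ioc 0 (min c 1)) :=
          measure_mono fun u hu => ⟨hu.1.1, le_min hu.2 hu.1.2.le⟩
      _ = ENNReal.ofReal (min c 1) := by rw [Real.volume_Ioc, sub_zero]
  · calc ENNReal.ofReal (min c 1) = volume (Ioo 0 (min c 1)) := by rw [Real.volume_Ioo, sub_zero]
      _ ≤ volume (Ioo (0 : ℝ) 1 ∩ Iic c) :=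
          measure_mono fun u hu => ⟨⟨hu.1, hu.2.trans_le (min_le_right _ _)⟩,
            hu.2.le.trans (min_le_left _ _)⟩

namespace ProbabilityTheory

variable (ρ τ : Measure ℝ) [IsProbabilityMeasure ρ]

lemma cdf'_eq_cdf : cdf' ρ = cdf ρ :=
  funext fun x => (cdf_eq_real ρ x).symm

lemma continuous_cdf [NullSingletonClass ρ] : Continuous (cdf ρ) := by
  refine continuous_iff_continuousAt.2 fun x =>
    continuousAt_iff_continuous_left'_right'.2 ⟨?_, ?_⟩
  · have hjump : (cdf ρ).measure {x} = ENNReal.ofReal (cdf ρ x - Function.leftLim (cdf ρ) x) :=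
      (cdf ρ).measure_singleton x
    rw [measure_cdf, measure_singleton, eq_comm, ENNReal.ofReal_eq_zero, sub_nonpos] at hjump
    exact (monotone_cdf ρ).continuousWithinAt_Iio_iff_leftLim_eq.2
      (le_antisymm ((monotone_cdf ρ).leftLim_le le_rfl) hjump)
  · exact ((cdf ρ).right_continuous x).mono Ioi_subset_Ici_self

lemma measure_cdf_le [NullSingletonClass ρ] (c : ℝ) :
    ρ {x | cdf ρ x ≤ c} = ENNReal.ofReal (min c 1) := by
  rcases le_or_gt 1 c with hc | hc
  · have hA : {x | cdf ρ x ≤ c} = univ := eq_univ_of_forall fun x => (cdf_le_one ρ x).trans hc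
    simp [hA, min_eq_right hc]
  rw [min_eq_left hc.le]
  set A := {x | cdf ρ x ≤ c}
  rcases A.eq_empty_or_nonempty with hA | hA
  · have hc0 : c ≤ 0 := ge_of_tendsto' (tendsto_cdf_atBot ρ) fun x =>
      (not_le.1 (eq_empty_iff_forall_notMem.1 hA x)).le
    rw [hA, measure_empty, ENNReal.ofReal_of_nonpos hc0]
  obtain ⟨x₀, hx₀⟩ := eventually_atTop.1 ((tendsto_cdf_atTop ρ).eventually (lt_mem_nhds hc))
  have hbdd : BddAbove A := ⟨x₀, fun x hx => not_lt.1 fun h => (hx₀ x h.le).not_ge hx⟩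
  have hclosed : IsClosed A := isClosed_le (continuous_cdf ρ) continuous_const
  have hmem : sSup A ∈ A := hclosed.csSup_mem hA hbdd
  have hA_eq : A = Iic (sSup A) :=
    Subset.antisymm (fun x hx => le_csSup hbdd hx) fun x hx => (monotone_cdf ρ hx).trans hmem
  -- `cdf ρ` exceeds `c` right of `sSup A`, so by continuity it reaches `c` at `sSup A`.
  have hge : c ≤ cdf ρ (sSup A) := by
    have hsub : Ioi (sSup A) ⊆ {x | c ≤ cdf ρ x} := fun x hx =>
      (lt_of_not_ge fun h : cdf ρ x ≤ c => (le_csSup hbdd h).not_gt hx).le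
    refine (isClosed_le continuous_const (continuous_cdf ρ)).closure_subset_iff.2 hsub ?_
    rw [closure_Ioi]
    exact self_mem_Ici
  rw [hA_eq, ← ofReal_cdf, le_antisymm hmem hge]

theorem map_cdf [NullSingletonClass ρ] : ρ.map (cdf ρ) = volume.restrict (Ioo 0 1) := by
  refine Measure.ext_of_Iic _ _ fun c => ?_
  rw [Measure.map_apply (monotone_cdf ρ).measurable measurableSet_Iic,
    Measure.restrict_apply measurableSet_Iic, inter_comm, volume_Ioo_inter_Iic]
  exact measure_cdf_le ρ c

lemma otMap1d_eq_comp : otMap1d ρ τ = qf τ ∘ cdf ρ :=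
  funext fun x => by rw [otMap1d, cdf'_eq_cdf]; rfl

variable [IsProbabilityMeasure τ]

lemma qf_le_iff {u t : ℝ} (h0 : 0 < u) (h1 : u < 1) : qf τ u ≤ t ↔ u ≤ cdf τ t := by
  rw [qf, cdf'_eq_cdf]
  set S := {z | u ≤ cdf τ z}
  have hne : S.Nonempty :=
    ((tendsto_cdf_atTop τ).eventually (lt_mem_nhds h1)).exists.imp fun _ hz => hz.le
  obtain ⟨z₀, hz₀⟩ := eventually_atBot.1 ((tendsto_cdf_atBot τ).eventually (gt_mem_nhds h0))
  have hbdd : BddBelow S := ⟨z₀, fun z hz => not_lt.1 fun h => (hz₀ z h.le).not_ge hz⟩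
  -- right continuity of `cdf τ` puts the infimum in `S`
  have hmem : sInf S ∈ S := by
    refine ge_of_tendsto ((cdf τ).right_continuous _ |>.mono Ioi_subset_Ici_self) ?_
    filter_upwards [self_mem_nhdsWithin] with x hx
    obtain ⟨z, hz, hzx⟩ := exists_lt_of_csInf_lt hne hx
    exact hz.trans (monotone_cdf τ hzx.le)
  exact ⟨fun h => hmem.trans (monotone_cdf τ h), fun h => csInf_le hbdd h⟩

lemma monotoneOn_qf : MonotoneOn (qf τ) (Ioo 0 1) := fun _ hu _ hv huv =>
  (qf_le_iff τ hu.1 hu.2).2 (huv.trans ((qf_le_iff τ hv.1 hv.2).1 le_rfl))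

lemma aemeasurable_qf : AEMeasurable (qf τ) (volume.restrict (Ioo 0 1)) :=
  aemeasurable_restrict_of_monotoneOn measurableSet_Ioo (monotoneOn_qf τ)

theorem map_qf : (volume.restrict (Ioo 0 1)).map (qf τ) = τ := by
  refine Measure.ext_of_Iic _ _ fun t => ?_
  have hpre : qf τ ⁻¹' Iic t ∩ Ioo 0 1 = Ioo 0 1 ∩ Iic (cdf τ t) := by
    ext u
    exact ⟨fun ⟨h, hu⟩ => ⟨hu, (qf_le_iff τ hu.1 hu.2).1 h⟩,
      fun ⟨hu, h⟩ => ⟨(qf_le_iff τ hu.1 hu.2).2 h, hu⟩⟩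
  rw [Measure.map_apply_of_aemeasurable (aemeasurable_qf τ) measurableSet_Iic,
    Measure.restrict_apply' measurableSet_Ioo, hpre, volume_Ioo_inter_Iic,
    min_eq_left (cdf_le_one τ t), ofReal_cdf]

variable [NullSingletonClass ρ]

lemma aemeasurable_qf_map_cdf : AEMeasurable (qf τ) (ρ.map (cdf ρ)) := by
  rw [map_cdf]
  exact aemeasurable_qf τ

lemma aemeasurable_otMap1d : AEMeasurable (otMap1d ρ τ) ρ := by
  rw [otMap1d_eq_comp]
  exact (aemeasurable_qf_map_cdf ρ τ).comp_aemeasurable (monotone_cdf ρ).measurable.aemeasurable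

theorem map_otMap1d : ρ.map (otMap1d ρ τ) = τ := by
  rw [otMap1d_eq_comp, ← (aemeasurable_qf_map_cdf ρ τ).map_map_of_aemeasurable
    (monotone_cdf ρ).measurable.aemeasurable, map_cdf, map_qf]

end ProbabilityTheory

theorem nullSingletonClass_map_linearMap {E : Type*} [NormedAddCommGroup E] [NormedSpace ℝ E]
    [MeasurableSpace E] [BorelSpace E] [FiniteDimensional ℝ E] {μ ν : Measure E}
    [ν.IsAddHaarMeasure] (hμ : μ ≪ ν) {L : E →ₗ[ℝ] ℝ} (hL : L ≠ 0) :
    NullSingletonClass (μ.map L) := by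
  obtain ⟨c, -, hc⟩ :=
    L.exists_map_addHaar_eq_smul_addHaar ν volume (LinearMap.surjective_iff_ne_zero.2 hL)
  have hac : μ.map L ≪ volume :=
    (hμ.map L.continuous_of_finiteDimensional.measurable).trans
      (hc ▸ Measure.smul_absolutelyContinuous)
  exact ⟨fun t => hac Real.volume_singleton⟩

section Slices

variable {n j : ℕ} {σ μ : Measure (Eu n)}

lemma measurable_proj (θ : Eu n) : Measurable (proj θ) :=
  (continuous_id.inner continuous_const).measurable

instance [IsProbabilityMeasure σ] (θ : Eu n) : IsProbabilityMeasure (sliceOf σ θ) :=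
  Measure.isProbabilityMeasure_map (measurable_proj θ).aemeasurable

lemma nullSingletonClass_sliceOf (hσ : σ ≪ volume) {θ : Eu n} (hθ : θ ≠ 0) :
    NullSingletonClass (sliceOf σ θ) := by
  have hL : (innerSL ℝ θ).toLinearMap ≠ 0 := fun h =>
    hθ (inner_self_eq_zero.1 (LinearMap.congr_fun h θ))
  have hproj : proj θ = (innerSL ℝ θ).toLinearMap := funext fun x => real_inner_comm θ x
  rw [sliceOf, hproj]
  exact nullSingletonClass_map_linearMap hσ hL

variable {θ : Fin n → Eu n}

lemma proj_sliceMap (hθ : Orthonormal ℝ θ) {i : Fin n} (hi : (i : ℕ) < j) (x : Eu n) :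
    proj (θ i) (sliceMap σ μ θ j x)
      = otMap1d (sliceOf σ (θ i)) (sliceOf μ (θ i)) (proj (θ i) x) := by
  rw [proj, sliceMap, hθ.inner_left_sum _ (Finset.mem_univ i), if_pos hi]
  rfl

lemma aemeasurable_sliceMap [IsProbabilityMeasure σ] [IsProbabilityMeasure μ]
    (hσ : σ ≪ volume) (hθ : Orthonormal ℝ θ) : AEMeasurable (sliceMap σ μ θ j) σ := by
  refine Finset.aemeasurable_fun_sum _ fun i _ => AEMeasurable.smul_const ?_ _
  by_cases hi : (i : ℕ) < j
  · have := nullSingletonClass_sliceOf hσ (hθ.ne_zero i)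
    simp only [if_pos hi]
    exact (aemeasurable_otMap1d (sliceOf σ (θ i)) (sliceOf μ (θ i))).comp_aemeasurable
      (measurable_proj _).aemeasurable
  · simp only [if_neg hi]
    exact (measurable_proj _).aemeasurable

end Slices

theorem stmt_5_general {n j : ℕ}
    (σ μ : Measure (Eu n)) [IsProbabilityMeasure σ] [IsProbabilityMeasure μ]
    (hac : σ ≪ volume)
    (θ : Fin n → Eu n) (hθ : Orthonormal ℝ θ) :
    ∀ i : Fin n, (i : ℕ) < j →
      sliceOf (σ.map (sliceMap σ μ θ j)) (θ i) = sliceOf μ (θ i) := by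
  intro i hi
  have := nullSingletonClass_sliceOf hac (hθ.ne_zero i)
  calc sliceOf (σ.map (sliceMap σ μ θ j)) (θ i)
      = σ.map (proj (θ i) ∘ sliceMap σ μ θ j) :=
        (measurable_proj _).aemeasurable.map_map_of_aemeasurable (aemeasurable_sliceMap hac hθ)
    _ = σ.map (otMap1d (sliceOf σ (θ i)) (sliceOf μ (θ i)) ∘ proj (θ i)) :=
        congrArg σ.map (funext (proj_sliceMap hθ hi))
    _ = (sliceOf σ (θ i)).map (otMap1d (sliceOf σ (θ i)) (sliceOf μ (θ i))) :=
        ((aemeasurable_otMap1d (sliceOf σ (θ i)) (sliceOf μ (θ i))).map_map_of_aemeasurable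
          (measurable_proj _).aemeasurable).symm
    _ = sliceOf μ (θ i) := map_otMap1d _ _

/-- the pushforward by the `j`-slice matching map has the same slices
as `μ` along the first `j` directions. -/
theorem stmt_5 {n j : ℕ} (hj1 : 1 ≤ j) (hjn : j ≤ n)
    (σ μ : Measure (Eu n)) [IsProbabilityMeasure σ] [IsProbabilityMeasure μ]
    (hac : σ ≪ volume) (hσ2 : FiniteSecondMoment σ) (hμ2 : FiniteSecondMoment μ)
    (θ : Fin n → Eu n) (hθ : Orthonormal ℝ θ) :
    ∀ i : Fin n, (i : ℕ) < j →
      sliceOf (σ.map (sliceMap σ μ θ j)) (θ i) = sliceOf μ (θ i) :=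
  stmt_5_general σ μ hac θ hθ

end
end
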